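/- arXiv:0902.3220 — 3 statements merged into one kernel-verified Lean document; each statement's English description precedes it below -/
import Mathlib

section
/- Let G be a self-similar, level-transitive, regular branch subgroup of Aut(X*). Then there exists n ≥ 0 such that X^m * G_# ≥ rist_G(m+n) for all m ≥ 0, i.e. the n-th level copies of the maximal branching subgroup eventually contain the rigid level stabilizers. -/
/-!
For a vertex `v` write `G⋉v = {g ∈ G | v*g ∈ G}`. Self-similarity gives `G⋉(t v) ≤ G⋉v`, and
conjugating by elements of `G` that move `v` to `w` shows that `[G : G⋉v]` depends only on the
level of `v`. These indices divide `[G : G_#]`, which is finite because `G_#` contains every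
branching subgroup. So the indices are eventually constant along levels, and from some level `N`
on `G⋉(t v) = G⋉v` for all `t`; then `v*h ∈ G_#` for every `h ∈ G⋉v`. Finally an element of
`rist_G(w)` with `|w| = m + N` is `w*h = u*(v*h)` with `|u| = m`, `|v| = N` and `h ∈ G⋉v`.
-/

open List

/-- Vertices of the regular rooted tree over alphabet `X`: finite words. -/
abbrev Vtx (X : Type*) := List X

section Tree

variable {X : Type*} [DecidableEq X]

/-- A permutation of the vertex set is a rooted-tree automorphism if it fixes the
root and maps children of a vertex to children of its image. -/
def IsTreeAut (f : Equiv.Perm (Vtx X)) : Prop :=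
  f [] = [] ∧ ∀ (w : Vtx X) (x : X), ∃ y : X, f (w ++ [x]) = f w ++ [y]

/-- The state (section) of `f` at the vertex `w`, as a function on vertices. -/
def stateFun (f : Equiv.Perm (Vtx X)) (w : Vtx X) : Vtx X → Vtx X :=
  fun t => (f (w ++ t)).drop w.length

/-- The rigid stabilizer of the vertex `v` in the full automorphism group:
all permutations moving only (proper or improper) descendants of `v`. -/
def rist (v : Vtx X) : Subgroup (Equiv.Perm (Vtx X)) where
  carrier := {g | ∀ w : Vtx X, ¬ v <+: w → g w = w}
  one_mem' := by intro w _; rfl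
  mul_mem' := by
    intro a b ha hb w hw
    have : (a * b) w = a (b w) := rfl
    rw [this, hb w hw, ha w hw]
  inv_mem' := by
    intro a ha w hw
    have h := ha w hw
    conv_lhs => rw [← h]
    exact Equiv.symm_apply_apply a w

/-- The rigid stabilizer of `v` in `G`. -/
def ristG (G : Subgroup (Equiv.Perm (Vtx X))) (v : Vtx X) :
    Subgroup (Equiv.Perm (Vtx X)) :=
  rist v ⊓ G

/-- The `n`-th level rigid stabilizer of `G`: the subgroup generated by the
rigid stabilizers of all vertices of level `n`. -/
def ristLevel (G : Subgroup (Equiv.Perm (Vtx X))) (n : ℕ) :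
    Subgroup (Equiv.Perm (Vtx X)) :=
  ⨆ v ∈ {v : Vtx X | v.length = n}, ristG G v

/-- The `n`-th level stabilizer of `G`: elements fixing all vertices of level `≤ n`. -/
def stabLevel (G : Subgroup (Equiv.Perm (Vtx X))) (n : ℕ) :
    Subgroup (Equiv.Perm (Vtx X)) :=
  G ⊓ { carrier := {g | ∀ w : Vtx X, w.length ≤ n → g w = w}
        one_mem' := by intro w _; rfl
        mul_mem' := by
          intro a b ha hb w hw
          have : (a * b) w = a (b w) := rfl
          rw [this, hb w hw, ha w hw]
        inv_mem' := by
          intro a ha w hw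
          have h := ha w hw
          conv_lhs => rw [← h]
          exact Equiv.symm_apply_apply a w }

/-- Underlying function of the vtr `v*g`. -/
def vtrFun (v : Vtx X) (g : Vtx X → Vtx X) : Vtx X → Vtx X :=
  fun w => if v <+: w then v ++ g (w.drop v.length) else w

lemma vtr_aux (v : Vtx X) (g h : Vtx X → Vtx X)
    (hgh : ∀ t, h (g t) = t) (w : Vtx X) :
    vtrFun v h (vtrFun v g w) = w := by
  by_cases hp : v <+: w
  · obtain ⟨t, rfl⟩ := hp
    simp [vtrFun, List.drop_left, hgh, List.prefix_append]
  · simp [vtrFun, hp]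

/-- The vtr `v*g`: the automorphism acting as `g` on the subtree rooted
at `v` and trivially elsewhere. -/
def vtr (v : Vtx X) (g : Equiv.Perm (Vtx X)) : Equiv.Perm (Vtx X) where
  toFun := vtrFun v g
  invFun := vtrFun v g.symm
  left_inv := vtr_aux v g g.symm fun t => g.symm_apply_apply t
  right_inv := vtr_aux v g.symm g fun t => g.apply_symm_apply t

lemma vtr_apply (v : Vtx X) (g : Equiv.Perm (Vtx X)) (w : Vtx X) :
    vtr v g w = if v <+: w then v ++ g (w.drop v.length) else w := rfl

/-- `g ↦ v*g` as a group homomorphism. -/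
def vtrHom (v : Vtx X) : Equiv.Perm (Vtx X) →* Equiv.Perm (Vtx X) where
  toFun := vtr v
  map_one' := by
    ext w
    by_cases hp : v <+: w
    · obtain ⟨t, rfl⟩ := hp
      simp [vtr, vtrFun, List.drop_left, List.prefix_append]
    · simp [vtr, vtrFun, hp]
  map_mul' := by
    intro a b
    ext w
    have hmul : (vtr v a * vtr v b) w = vtr v a (vtr v b w) := rfl
    rw [hmul]
    by_cases hp : v <+: w
    · obtain ⟨t, rfl⟩ := hp
      simp [vtr, vtrFun, List.drop_left, List.prefix_append]
    · simp [vtr, vtrFun, hp]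

/-- `K` is a branching subgroup of `G`: `K ≤ G` and `v*K ≤ K` for all vertices. -/
def IsBranching (G K : Subgroup (Equiv.Perm (Vtx X))) : Prop :=
  K ≤ G ∧ ∀ v : Vtx X, ∀ g ∈ K, vtr v g ∈ K

/-- The product `X^n * K` of the translates `v*K` over all vertices of level `n`. -/
def levelProd (K : Subgroup (Equiv.Perm (Vtx X))) (n : ℕ) :
    Subgroup (Equiv.Perm (Vtx X)) :=
  Subgroup.closure {p | ∃ v : Vtx X, v.length = n ∧ ∃ g ∈ K, p = vtr v g}

/-- The group `G⋉v` of states at `v` of the rigid stabilizer: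
those `g ∈ G` with `v*g ∈ G`. -/
def pristSub (G : Subgroup (Equiv.Perm (Vtx X))) (v : Vtx X) :
    Subgroup (Equiv.Perm (Vtx X)) :=
  G ⊓ G.comap (vtrHom v)

/-- `G_#`, the intersection of all `G⋉v` (the maximal branching subgroup when
`G` is regular branch). -/
def Gsharp (G : Subgroup (Equiv.Perm (Vtx X))) : Subgroup (Equiv.Perm (Vtx X)) :=
  ⨅ v : Vtx X, pristSub G v

/-- `G` is self-similar: all states of elements of `G` are (induced by) elements of `G`. -/
def SelfSimilar (G : Subgroup (Equiv.Perm (Vtx X))) : Prop :=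
  ∀ g ∈ G, ∀ w : Vtx X, ∃ h ∈ G, ∀ t : Vtx X, h t = stateFun g w t

/-- `G` is level-transitive: transitive on each level of the tree. -/
def LevelTransitive (G : Subgroup (Equiv.Perm (Vtx X))) : Prop :=
  ∀ v w : Vtx X, v.length = w.length → ∃ g ∈ G, g v = w

/-- `G` is recurrent: the state at `v` of the stabilizer of `v` is all of `G`. -/
def Recurrent (G : Subgroup (Equiv.Perm (Vtx X))) : Prop :=
  ∀ v : Vtx X, ∀ h : Equiv.Perm (Vtx X),
    (h ∈ G ↔ ∃ g ∈ G, g v = v ∧ ∀ t : Vtx X, h t = stateFun g v t)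

/-- `G` is a regular branch group (for this action): it has a non-trivial
branching subgroup `K` with all products `X^n*K` of finite index in `G`. -/
def RegularBranch (G : Subgroup (Equiv.Perm (Vtx X))) : Prop :=
  ∃ K : Subgroup (Equiv.Perm (Vtx X)), IsBranching G K ∧ K ≠ ⊥ ∧
    ∀ n : ℕ, ((levelProd K n).subgroupOf G).FiniteIndex

/-- The subgroup generated by `e`-th powers of elements of `H`. -/
def powSubgroup {P : Type*} [Group P] (H : Subgroup P) (e : ℕ) : Subgroup P :=
  Subgroup.closure {x | ∃ h ∈ H, x = h ^ e}

/-- The normal closure of `g` in the subgroup `Γ`. -/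
def nclosure {P : Type*} [Group P] (Γ : Subgroup P) (g : P) : Subgroup P :=
  Subgroup.closure {x | ∃ h ∈ Γ, x = h * g * h⁻¹}

/-- `g` is finite-state: it has only finitely many states. -/
def FiniteState (g : Equiv.Perm (Vtx X)) : Prop :=
  {f : Vtx X → Vtx X | ∃ w : Vtx X, f = stateFun g w}.Finite

/-- `g` fixes the boundary ray `y`, i.e. it fixes each of its finite prefixes. -/
def fixesRay (g : Equiv.Perm (Vtx X)) (y : ℕ → X) : Prop :=
  ∀ n : ℕ, g ((List.range n).map y) = (List.range n).map y

end Tree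

/-- A group satisfies a (non-trivial) group law. -/
def SatisfiesLaw (G : Type*) [Group G] : Prop :=
  ∃ w : FreeGroup ℕ, w ≠ 1 ∧ ∀ φ : FreeGroup ℕ →* G, φ w = 1

theorem Subgroup.le_of_le_of_relIndex_eq {P : Type*} [Group P] {H K L : Subgroup P}
    (hHK : H ≤ K) (hKL : K ≤ L) (hidx : H.relIndex L = K.relIndex L)
    (hK : K.relIndex L ≠ 0) : K ≤ H := by
  have h := Subgroup.relIndex_mul_relIndex H K L hHK hKL
  rw [hidx] at h
  exact Subgroup.relIndex_eq_one.mp <| (Nat.mul_eq_right hK).mp h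

theorem exists_forall_length_ge_eq_of_bddAbove {X : Type*} {ν : Vtx X → ℕ}
    (hbdd : BddAbove (Set.range ν)) (hmono : ∀ t v, ν v ≤ ν (t ++ v))
    (hlen : ∀ v w, v.length = w.length → ν v = ν w) :
    ∃ N M, ∀ v, N ≤ v.length → ν v = M := by
  obtain ⟨w, hw⟩ := Nat.sSup_mem (Set.range_nonempty ν) hbdd
  refine ⟨w.length, ν w, fun v hv => le_antisymm (hw ▸ le_csSup hbdd ⟨v, rfl⟩) ?_⟩
  calc ν w ≤ ν (v.take (v.length - w.length) ++ w) := hmono _ _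
    _ = ν v := hlen _ _ (by rw [List.length_append, List.length_take]; omega)

namespace IsTreeAut

variable {X : Type*} {f : Equiv.Perm (Vtx X)}

theorem length_apply (hf : IsTreeAut f) (z : Vtx X) : (f z).length = z.length := by
  induction z using List.reverseRecOn with
  | nil => rw [hf.1]
  | append_singleton w x ih =>
    obtain ⟨y, hy⟩ := hf.2 w x
    simp [hy, ih]

theorem apply_append (hf : IsTreeAut f) (w t : Vtx X) :
    f (w ++ t) = f w ++ stateFun f w t := by
  have hpre : f w <+: f (w ++ t) := by
    induction t using List.reverseRecOn with
    | nil => simp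
    | append_singleton r x ih =>
      obtain ⟨y, hy⟩ := hf.2 (w ++ r) x
      rw [← List.append_assoc, hy]
      exact ih.trans (List.prefix_append _ _)
  obtain ⟨r, hr⟩ := hpre
  rw [stateFun, ← hr, ← hf.length_apply w, List.drop_left]

theorem isPrefix_apply (hf : IsTreeAut f) {w z : Vtx X} (h : w <+: z) : f w <+: f z := by
  obtain ⟨t, rfl⟩ := h
  rw [hf.apply_append]
  exact List.prefix_append _ _

/-- A tree automorphism cannot move a vertex while fixing its parent and its siblings. -/
theorem apply_eq_self_of_mem_rist (hf : IsTreeAut f) {w : Vtx X} (hfw : f ∈ rist w) :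
    f w = w := by
  rcases List.eq_nil_or_concat' w with rfl | ⟨p, x, rfl⟩
  · exact hf.1
  have hp : f p = p := hfw p fun hc => by simpa using hc.length_le
  obtain ⟨y, hy⟩ := hf.2 p x
  rw [hp] at hy
  by_contra hne
  have hxy : x ≠ y := fun h => hne (h ▸ hy)
  have hsib : f (p ++ [y]) = p ++ [y] := hfw _ fun hc => hxy (by simpa using hc.eq_of_length)
  exact hxy (by simpa using f.injective (hy.trans hsib.symm))

end IsTreeAut

section Vtr

variable {X : Type*} [DecidableEq X]

theorem vtr_nil (g : Equiv.Perm (Vtx X)) : vtr [] g = g :=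
  Equiv.ext fun z => by simp [vtr_apply]

theorem vtr_vtr (u v : Vtx X) (h : Equiv.Perm (Vtx X)) :
    vtr u (vtr v h) = vtr (u ++ v) h := by
  refine Equiv.ext fun z => ?_
  rw [vtr_apply u, vtr_apply (u ++ v)]
  by_cases hu : u <+: z
  · obtain ⟨r, rfl⟩ := hu
    rw [if_pos (List.prefix_append u r), List.drop_left, vtr_apply v]
    by_cases hv : v <+: r
    · rw [if_pos hv, if_pos ((List.prefix_append_right_inj u).mpr hv), List.length_append,
        List.drop_length_add_append, List.append_assoc]
    · rw [if_neg hv, if_neg (mt (List.prefix_append_right_inj u).mp hv)]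
  · rw [if_neg hu, if_neg (fun hc => hu ((List.prefix_append u v).trans hc))]

theorem stateFun_vtr_append (u v : Vtx X) (h : Equiv.Perm (Vtx X)) :
    stateFun (vtr (u ++ v) h) u = vtr v h := by
  funext t
  rw [stateFun, ← vtr_vtr, vtr_apply u, if_pos (List.prefix_append u t), List.drop_left,
    List.drop_left]

theorem eq_vtr_of_mem_rist {g h : Equiv.Perm (Vtx X)} (hg : IsTreeAut g) {w : Vtx X}
    (hgw : g ∈ rist w) (hh : ∀ t, h t = stateFun g w t) : g = vtr w h := by
  refine Equiv.ext fun z => ?_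
  rw [vtr_apply]
  by_cases hz : w <+: z
  · obtain ⟨t, rfl⟩ := hz
    rw [if_pos (List.prefix_append _ _), List.drop_left, hh t, hg.apply_append,
      hg.apply_eq_self_of_mem_rist hgw]
  · rw [if_neg hz, hgw z hz]

theorem conj_vtr {f s : Equiv.Perm (Vtx X)} (hf : IsTreeAut f) (hf' : IsTreeAut f⁻¹) (w : Vtx X)
    (hs : ∀ t, s t = stateFun f w t) (h : Equiv.Perm (Vtx X)) :
    f * vtr w h * f⁻¹ = vtr (f w) (s * h * s⁻¹) := by
  refine Equiv.ext fun z => ?_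
  change f (vtr w h (f⁻¹ z)) = _
  rw [vtr_apply (f w)]
  by_cases hz : f w <+: z
  · obtain ⟨r, rfl⟩ := hz
    set r' := stateFun f⁻¹ (f w) r
    have hinv : f⁻¹ (f w ++ r) = w ++ r' := by
      rw [hf'.apply_append, Equiv.Perm.coe_inv, Equiv.symm_apply_apply]
    have hsr : s r' = r := by
      rw [hs, stateFun, ← hinv, Equiv.Perm.coe_inv, Equiv.apply_symm_apply, ← hf.length_apply w,
        List.drop_left]
    have hsinv : s⁻¹ r = r' := by rw [← hsr, Equiv.Perm.coe_inv, Equiv.symm_apply_apply]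
    rw [if_pos (List.prefix_append _ _), hinv, vtr_apply, if_pos (List.prefix_append _ _),
      List.drop_left, hf.apply_append, ← hs, List.drop_left, Equiv.Perm.mul_apply,
      Equiv.Perm.mul_apply, hsinv]
  · have hz' : ¬ w <+: f⁻¹ z := fun hc => hz (by simpa using hf.isPrefix_apply hc)
    rw [if_neg hz, vtr_apply, if_neg hz', Equiv.Perm.coe_inv, Equiv.apply_symm_apply]

end Vtr

section BranchingSubgroups

variable {X : Type*} [DecidableEq X] {G : Subgroup (Equiv.Perm (Vtx X))}

theorem levelProd_zero (K : Subgroup (Equiv.Perm (Vtx X))) : levelProd K 0 = K := by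
  refine le_antisymm (Subgroup.closure_le _ |>.mpr ?_) fun g hg => ?_
  · rintro _ ⟨v, hv, g, hg, rfl⟩
    rwa [List.length_eq_zero_iff.mp hv, vtr_nil]
  · exact Subgroup.subset_closure ⟨[], rfl, g, hg, (vtr_nil g).symm⟩

theorem Gsharp_le_pristSub (v : Vtx X) : Gsharp G ≤ pristSub G v :=
  iInf_le _ v

theorem IsBranching.le_Gsharp {K : Subgroup (Equiv.Perm (Vtx X))} (hK : IsBranching G K) :
    K ≤ Gsharp G :=
  fun _ hk => Subgroup.mem_iInf.mpr fun v => ⟨hK.1 hk, hK.1 (hK.2 v _ hk)⟩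

theorem RegularBranch.relIndex_Gsharp_ne_zero (hRB : RegularBranch G) :
    (Gsharp G).relIndex G ≠ 0 := by
  obtain ⟨K, hK, -, hfin⟩ := hRB
  have hKfin := hfin 0
  rw [levelProd_zero] at hKfin
  exact ne_zero_of_dvd_ne_zero hKfin.index_ne_zero
    (Subgroup.relIndex_dvd_of_le_left G hK.le_Gsharp)

theorem SelfSimilar.vtr_mem_of_vtr_append_mem (hSS : SelfSimilar G) (u v : Vtx X)
    {h : Equiv.Perm (Vtx X)} (hh : vtr (u ++ v) h ∈ G) : vtr v h ∈ G := by
  obtain ⟨h', hh'G, hh'⟩ := hSS _ hh u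
  rwa [show vtr v h = h' from Equiv.ext fun t => by rw [hh', stateFun_vtr_append]]

theorem SelfSimilar.pristSub_append_le (hSS : SelfSimilar G) (u v : Vtx X) :
    pristSub G (u ++ v) ≤ pristSub G v :=
  fun _ hh => ⟨hh.1, hSS.vtr_mem_of_vtr_append_mem u v hh.2⟩

theorem SelfSimilar.exists_eq_vtr_of_mem_ristG (hSS : SelfSimilar G)
    (hAut : ∀ g ∈ G, IsTreeAut g) {w : Vtx X} {g : Equiv.Perm (Vtx X)} (hg : g ∈ ristG G w) :
    ∃ h ∈ G, g = vtr w h := by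
  obtain ⟨h, hhG, hh⟩ := hSS g hg.2 w
  exact ⟨h, hhG, eq_vtr_of_mem_rist (hAut g hg.2) hg.1 hh⟩

open scoped Pointwise in
theorem relIndex_pristSub_dvd (hAut : ∀ g ∈ G, IsTreeAut g) (hSS : SelfSimilar G)
    (hLT : LevelTransitive G) {v w : Vtx X} (hvw : v.length = w.length) :
    (pristSub G w).relIndex G ∣ (pristSub G v).relIndex G := by
  obtain ⟨f, hfG, rfl⟩ := hLT v w hvw
  obtain ⟨s, hsG, hs⟩ := hSS f hfG v
  set c := ConjAct.toConjAct s
  have hcG : c • G = G := Subgroup.conjAct_pointwise_smul_eq_self (Subgroup.le_normalizer hsG)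
  have hle : c • pristSub G v ≤ pristSub G (f v) := by
    refine Subgroup.pointwise_smul_subset_iff.mpr fun h hh => ?_
    rw [Subgroup.mem_inv_pointwise_smul_iff, ConjAct.toConjAct_smul]
    refine ⟨G.mul_mem (G.mul_mem hsG hh.1) (G.inv_mem hsG), ?_⟩
    change vtr (f v) (s * h * s⁻¹) ∈ G
    rw [← conj_vtr (hAut f hfG) (hAut _ (G.inv_mem hfG)) v hs]
    exact G.mul_mem (G.mul_mem hfG hh.2) (G.inv_mem hfG)
  calc (pristSub G (f v)).relIndex G ∣ (c • pristSub G v).relIndex G :=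
        Subgroup.relIndex_dvd_of_le_left G hle
    _ = (pristSub G v).relIndex G := by
        rw [← Subgroup.relIndex_pointwise_smul c (pristSub G v) G, hcG]

theorem exists_pristSub_append_eq (hAut : ∀ g ∈ G, IsTreeAut g) (hSS : SelfSimilar G)
    (hLT : LevelTransitive G) (hRB : RegularBranch G) :
    ∃ N, ∀ v : Vtx X, N ≤ v.length → ∀ t, pristSub G (t ++ v) = pristSub G v := by
  set ν : Vtx X → ℕ := fun v => (pristSub G v).relIndex G
  have hdvd : ∀ v, ν v ∣ (Gsharp G).relIndex G :=
    fun v => Subgroup.relIndex_dvd_of_le_left G (Gsharp_le_pristSub v)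
  have hne : ∀ v, ν v ≠ 0 := fun v h0 => hRB.relIndex_Gsharp_ne_zero (by simpa [h0] using hdvd v)
  have hbdd : BddAbove (Set.range ν) := ⟨_, by
    rintro _ ⟨v, rfl⟩
    exact Nat.le_of_dvd (Nat.pos_of_ne_zero hRB.relIndex_Gsharp_ne_zero) (hdvd v)⟩
  have hmono : ∀ t v, ν v ≤ ν (t ++ v) := fun t v =>
    Subgroup.relIndex_le_of_le_left (hSS.pristSub_append_le t v) (hne _)
  have hlen : ∀ v w : Vtx X, v.length = w.length → ν v = ν w := fun v w hvw =>
    Nat.dvd_antisymm (relIndex_pristSub_dvd hAut hSS hLT hvw.symm)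
      (relIndex_pristSub_dvd hAut hSS hLT hvw)
  obtain ⟨N, M, hM⟩ := exists_forall_length_ge_eq_of_bddAbove hbdd hmono hlen
  refine ⟨N, fun v hv t => le_antisymm (hSS.pristSub_append_le t v) ?_⟩
  refine Subgroup.le_of_le_of_relIndex_eq (hSS.pristSub_append_le t v) inf_le_left ?_ (hne v)
  exact (hM _ (by rw [List.length_append]; omega)).trans (hM v hv).symm

theorem vtr_mem_Gsharp {v : Vtx X} (hv : ∀ t, pristSub G (t ++ v) = pristSub G v)
    {h : Equiv.Perm (Vtx X)} (hh : h ∈ pristSub G v) : vtr v h ∈ Gsharp G := by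
  refine Subgroup.mem_iInf.mpr fun t => ⟨hh.2, ?_⟩
  change vtr t (vtr v h) ∈ G
  rw [vtr_vtr]
  exact ((hv t).symm ▸ hh).2

end BranchingSubgroups

theorem Gsharp_contains_rist_shifted_general
    {X : Type*} [DecidableEq X]
    (G : Subgroup (Equiv.Perm (Vtx X))) (hAut : ∀ g ∈ G, IsTreeAut g)
    (hSS : SelfSimilar G) (hLT : LevelTransitive G) (hRB : RegularBranch G) :
    ∃ n : ℕ, ∀ m : ℕ, ristLevel G (m + n) ≤ levelProd (Gsharp G) m := by
  obtain ⟨N, hN⟩ := exists_pristSub_append_eq hAut hSS hLT hRB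
  refine ⟨N, fun m => iSup₂_le fun w (hw : w.length = m + N) g hg => ?_⟩
  obtain ⟨h, hhG, rfl⟩ := hSS.exists_eq_vtr_of_mem_ristG hAut hg
  obtain ⟨u, v, rfl, hu, hv⟩ : ∃ u v, w = u ++ v ∧ u.length = m ∧ v.length = N :=
    ⟨w.take m, w.drop m, (List.take_append_drop m w).symm, by rw [List.length_take]; omega,
      by rw [List.length_drop]; omega⟩
  have hhv : h ∈ pristSub G v := hSS.pristSub_append_le u v ⟨hhG, hg.2⟩
  rw [← vtr_vtr]
  exact Subgroup.subset_closure ⟨u, hu, _, vtr_mem_Gsharp (hN v hv.ge) hhv, rfl⟩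

/-- the level copies of `G_#` eventually contain the rigid level
stabilizers: there is `n` with `X^m * G_# ≥ rist_G(m+n)` for all `m`. -/
theorem Gsharp_contains_rist_shifted
    {X : Type*} [DecidableEq X] [Fintype X]
    (G : Subgroup (Equiv.Perm (Vtx X))) (hAut : ∀ g ∈ G, IsTreeAut g)
    (hSS : SelfSimilar G) (hLT : LevelTransitive G) (hRB : RegularBranch G) :
    ∃ n : ℕ, ∀ m : ℕ, ristLevel G (m + n) ≤ levelProd (Gsharp G) m :=
  Gsharp_contains_rist_shifted_general G hAut hSS hLT hRB
end

section
/- Let G be a recurrent, self-similar, level-transitive, regular branch subgroup of Aut(X*), and let n be such that G⋉v = G_# for all |v| ≥ n. Then X^m * G_# = rist_G(m) for all m ≥ n. -/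
open List

/-! The rigid stabilizer `rist G(v)` is the image of `G⋉v` under `g ↦ v*g`: every element of
`rist v` is `v*s` for its own state `s` at `v`, and for a tree automorphism in `rist G(v)` this state
lies in `G` by recurrence, since the automorphism fixes `v`. Beyond level `n` we have `G⋉v = G_#`, so
`rist_G(m)`, generated by the `rist_G(v)` with `|v| = m`, is generated by the `v*G_#`. -/

section RigidStabilizer

variable {X : Type*} [DecidableEq X]

lemma vtr_mem_rist (v : Vtx X) (g : Equiv.Perm (Vtx X)) : vtr v g ∈ rist v :=
  fun w hw => by rw [vtr_apply, if_neg hw]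

lemma stateFun_vtr_self (v : Vtx X) (g : Equiv.Perm (Vtx X)) : stateFun (vtr v g) v = g := by
  funext t
  rw [stateFun, vtr_apply, if_pos (List.prefix_append v t), List.drop_left, List.drop_left]

lemma prefix_apply_of_mem_rist {v w : Vtx X} {h : Equiv.Perm (Vtx X)} (hh : h ∈ rist v)
    (hw : v <+: w) : v <+: h w := by
  by_contra hhw
  rw [h.injective (hh (h w) hhw)] at hhw
  exact hhw hw

lemma append_stateFun_of_mem_rist {v : Vtx X} {h : Equiv.Perm (Vtx X)} (hh : h ∈ rist v)
    (t : Vtx X) : v ++ stateFun h v t = h (v ++ t) :=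
  List.prefix_iff_eq_append.mp (prefix_apply_of_mem_rist hh (List.prefix_append v t))

lemma stateFun_comp_of_mem_rist {v : Vtx X} {g : Equiv.Perm (Vtx X)} (hg : g ∈ rist v)
    (h : Equiv.Perm (Vtx X)) (t : Vtx X) :
    stateFun h v (stateFun g v t) = stateFun (h * g) v t := by
  rw [stateFun, append_stateFun_of_mem_rist hg]
  rfl

lemma stateFun_inv_mul_cancel_of_mem_rist {v : Vtx X} {h : Equiv.Perm (Vtx X)} (hh : h ∈ rist v)
    (t : Vtx X) : stateFun h⁻¹ v (stateFun h v t) = t := by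
  rw [stateFun_comp_of_mem_rist hh, inv_mul_cancel, stateFun]
  exact List.drop_left

lemma range_vtrHom (v : Vtx X) : (vtrHom v).range = rist v := by
  refine _root_.le_antisymm ?_ fun h hh => ?_
  · rintro _ ⟨g, rfl⟩
    exact vtr_mem_rist v g
  · have hh' : h⁻¹ ∈ rist v := inv_mem hh
    let s : Equiv.Perm (Vtx X) :=
      ⟨stateFun h v, stateFun h⁻¹ v, stateFun_inv_mul_cancel_of_mem_rist hh,
        fun t => by simpa using stateFun_inv_mul_cancel_of_mem_rist hh' t⟩
    refine ⟨s, Equiv.ext fun w => ?_⟩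
    by_cases hw : v <+: w
    · obtain ⟨t, rfl⟩ := hw
      change vtr v s (v ++ t) = h (v ++ t)
      rw [vtr_apply, if_pos (List.prefix_append v t), List.drop_left]
      exact append_stateFun_of_mem_rist hh t
    · exact (vtr_apply v s w).trans ((if_neg hw).trans (hh w hw).symm)

lemma IsTreeAut.apply_eq_self_of_mem_rist_s7 {v : Vtx X} {h : Equiv.Perm (Vtx X)}
    (hA : IsTreeAut h) (hh : h ∈ rist v) : h v = v := by
  rcases v.eq_nil_or_concat with rfl | ⟨u, x, rfl⟩
  · exact hA.1
  rw [List.concat_eq_append] at hh ⊢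
  have hu : h u = u := hh u fun hp => by simpa using hp.length_le
  obtain ⟨y, hy⟩ := hA.2 u x
  rw [hu] at hy
  have hpre := prefix_apply_of_mem_rist hh (List.prefix_refl _)
  rw [hy] at hpre ⊢
  exact (hpre.eq_of_length (by simp)).symm

lemma ristG_eq_map_pristSub {G : Subgroup (Equiv.Perm (Vtx X))} (hAut : ∀ g ∈ G, IsTreeAut g)
    (hRec : Recurrent G) (v : Vtx X) : ristG G v = (pristSub G v).map (vtrHom v) := by
  refine _root_.le_antisymm (fun h hh => ?_) ?_
  · obtain ⟨hr, hG⟩ := Subgroup.mem_inf.mp hh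
    obtain ⟨s, rfl⟩ : h ∈ (vtrHom v).range := (range_vtrHom v).ge hr
    have hs : s ∈ G := (hRec v s).mpr ⟨vtr v s, hG,
      (hAut _ hG).apply_eq_self_of_mem_rist_s7 hr, fun t => by rw [stateFun_vtr_self]⟩
    exact ⟨s, Subgroup.mem_inf.mpr ⟨hs, hG⟩, rfl⟩
  · rintro _ ⟨g, hg, rfl⟩
    exact Subgroup.mem_inf.mpr ⟨vtr_mem_rist v g, (Subgroup.mem_inf.mp hg).2⟩

lemma levelProd_eq_iSup_map (K : Subgroup (Equiv.Perm (Vtx X))) (m : ℕ) :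
    levelProd K m = ⨆ v ∈ {v : Vtx X | v.length = m}, K.map (vtrHom v) := by
  refine _root_.le_antisymm ((Subgroup.closure_le _).mpr ?_) (iSup₂_le fun v hv => ?_)
  · rintro _ ⟨v, hv, g, hg, rfl⟩
    exact le_iSup₂ (f := fun v (_ : v ∈ {v : Vtx X | v.length = m}) => K.map (vtrHom v)) v hv
      ⟨g, hg, rfl⟩
  · rintro _ ⟨g, hg, rfl⟩
    exact Subgroup.subset_closure ⟨v, hv, g, hg, rfl⟩

end RigidStabilizer

theorem levelProd_Gsharp_eq_ristLevel_general
    {X : Type*} [DecidableEq X]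
    (G : Subgroup (Equiv.Perm (Vtx X))) (hAut : ∀ g ∈ G, IsTreeAut g)
    (hRec : Recurrent G)
    (n : ℕ) (hn : ∀ v : Vtx X, n ≤ v.length → pristSub G v = Gsharp G) :
    ∀ m : ℕ, n ≤ m → levelProd (Gsharp G) m = ristLevel G m := by
  intro m hm
  rw [levelProd_eq_iSup_map, ristLevel]
  refine iSup_congr fun v => iSup_congr fun (hv : v.length = m) => ?_
  rw [ristG_eq_map_pristSub hAut hRec, hn v (hv ▸ hm)]

/-- for a recurrent, self-similar, level-transitive regular branch
group, `X^m * G_# = rist_G(m)` for all large enough `m`. -/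
theorem levelProd_Gsharp_eq_ristLevel
    {X : Type*} [DecidableEq X] [Fintype X]
    (G : Subgroup (Equiv.Perm (Vtx X))) (hAut : ∀ g ∈ G, IsTreeAut g)
    (hRec : Recurrent G) (hSS : SelfSimilar G) (hLT : LevelTransitive G)
    (hRB : RegularBranch G)
    (n : ℕ) (hn : ∀ v : Vtx X, n ≤ v.length → pristSub G v = Gsharp G) :
    ∀ m : ℕ, n ≤ m → levelProd (Gsharp G) m = ristLevel G m :=
  levelProd_Gsharp_eq_ristLevel_general G hAut hRec n hn
end

section
/- Let Γ ≤ Aut(T) be a level-transitive branch group and let N ≠ {1} be a normal subgroup of Γ. Then N contains rist_Γ(n)' for some n ≥ 0. -/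
open List

/-!
A nontrivial `g ∈ N` moves some vertex `u`. Then `g rist_Γ(u) g⁻¹ ≤ rist(g u)` commutes with
`rist_Γ(u)`, because `g u ≠ u` lie on the same level, and for `ξ, η ∈ rist_Γ(u)` this gives
`⁅⁅g, ξ⁻¹⁆, η⁆ = ⁅ξ, η⁆`, whose left side lies in `N`. Level-transitivity carries
`rist_Γ(u)' ≤ N` to every vertex of the level of `u`, and rigid stabilizers of distinct vertices
of one level commute, so `rist_Γ(n)' ≤ N` for `n = |u|`.
-/

open commutatorElement

namespace Subgroup

variable {G : Type*} [Group G] {N : Subgroup G}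

theorem commutatorElement_mem_of_mem_normalizer {x y : G} (hx : x ∈ N) (hy : y ∈ normalizer N) :
    ⁅x, y⁆ ∈ N :=
  le_normalizer_iff_commutator_le_left.mp le_rfl (commutator_mem_commutator hx hy)

/-- For `a` in the normalizer, this is the preimage of the centralizer of `a N` in
`normalizer N ⧸ N`. -/
def centralizerModulo (N : Subgroup G) (a : G) : Subgroup G where
  carrier := {b | b ∈ normalizer N ∧ ⁅a, b⁆ ∈ N}
  one_mem' := ⟨one_mem _, by simpa only [commutatorElement_one_right] using N.one_mem⟩
  mul_mem' := by
    rintro b c ⟨hb, hab⟩ ⟨hc, hac⟩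
    refine ⟨mul_mem hb hc, ?_⟩
    have hsplit : ⁅a, b * c⁆ = ⁅a, b⁆ * (b * ⁅a, c⁆ * b⁻¹) := by
      simp only [commutatorElement_def]; group
    rw [hsplit]
    exact N.mul_mem hab ((mem_normalizer_iff.mp hb _).mp hac)
  inv_mem' := by
    rintro b ⟨hb, hab⟩
    refine ⟨inv_mem hb, ?_⟩
    have hconj : ⁅a, b⁻¹⁆ = b⁻¹ * ⁅a, b⁆⁻¹ * b := by
      simp only [commutatorElement_def]; group
    rw [hconj]
    exact (mem_normalizer_iff''.mp hb _).mp (N.inv_mem hab)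

theorem commutator_iSup_le {ι : Sort*} {H : ι → Subgroup G} (hH : ∀ i, H i ≤ normalizer N)
    (hcomm : ∀ i j, ⁅H i, H j⁆ ≤ N) : ⁅⨆ i, H i, ⨆ i, H i⁆ ≤ N := by
  have hswap {a b : G} (h : ⁅a, b⁆ ∈ N) : ⁅b, a⁆ ∈ N := by
    simpa only [commutatorElement_inv] using N.inv_mem h
  have hleft (i : ι) (a : G) (ha : a ∈ H i) : ⨆ j, H j ≤ N.centralizerModulo a :=
    iSup_le fun j b hb => ⟨hH j hb, commutator_le.mp (hcomm i j) a ha b hb⟩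
  have hright (b : G) (hb : b ∈ ⨆ j, H j) : ⨆ i, H i ≤ N.centralizerModulo b :=
    iSup_le fun i a ha => ⟨hH i ha, hswap (hleft i a ha hb).2⟩
  exact commutator_le.mpr fun a ha b hb => hswap (hright b hb ha).2

theorem commutator_le_of_commute_conj {R : Subgroup G} (hR : R ≤ normalizer N) {g : G}
    (hg : g ∈ N) (hcomm : ∀ ξ ∈ R, ∀ η ∈ R, Commute (g * ξ * g⁻¹) η) : ⁅R, R⁆ ≤ N := by
  refine commutator_le.mpr fun ξ hξ η hη => ?_
  have hconj : Commute (g * ξ⁻¹ * g⁻¹) (ξ * η * ξ⁻¹) :=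
    hcomm _ (R.inv_mem hξ) _ (R.mul_mem (R.mul_mem hξ hη) (R.inv_mem hξ))
  have hrewrite : ⁅⁅g, ξ⁻¹⁆, η⁆ = ⁅ξ, η⁆ :=
    calc ⁅⁅g, ξ⁻¹⁆, η⁆ = g * ξ⁻¹ * g⁻¹ * (ξ * η * ξ⁻¹) * (g * ξ⁻¹ * g⁻¹)⁻¹ * η⁻¹ := by
          simp only [commutatorElement_def]; group
      _ = ⁅ξ, η⁆ := by rw [hconj.eq, commutatorElement_def]; group
  rw [← hrewrite]
  exact commutatorElement_mem_of_mem_normalizer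
    (commutatorElement_mem_of_mem_normalizer hg (hR (R.inv_mem hξ))) (hR hη)

end Subgroup

section Tree

variable {X : Type*}

theorem IsTreeAut.exists_apply_append {f : Equiv.Perm (Vtx X)} (hf : IsTreeAut f) (u s : Vtx X) :
    ∃ s' : Vtx X, f (u ++ s) = f u ++ s' ∧ s'.length = s.length := by
  induction s using List.reverseRecOn with
  | nil => exact ⟨[], by simp, rfl⟩
  | append_singleton s x ih =>
    obtain ⟨s', hs', hlen⟩ := ih
    obtain ⟨y, hy⟩ := hf.2 (u ++ s) x
    refine ⟨s' ++ [y], ?_, by simp [hlen]⟩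
    rw [← List.append_assoc, hy, hs', List.append_assoc]

theorem IsTreeAut.length_apply_s9 {f : Equiv.Perm (Vtx X)} (hf : IsTreeAut f) (w : Vtx X) :
    (f w).length = w.length := by
  obtain ⟨s', hs', hlen⟩ := hf.exists_apply_append [] w
  simpa [hf.1, hlen] using congrArg List.length hs'

theorem IsTreeAut.isPrefix_apply_s9 {f : Equiv.Perm (Vtx X)} (hf : IsTreeAut f) {u t : Vtx X}
    (h : u <+: t) : f u <+: f t := by
  obtain ⟨s, rfl⟩ := h
  obtain ⟨s', hs', -⟩ := hf.exists_apply_append u s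
  exact ⟨s', hs'.symm⟩

theorem isPrefix_apply_of_mem_rist {u w : Vtx X} {a : Equiv.Perm (Vtx X)} (ha : a ∈ rist u)
    (hw : u <+: w) : u <+: a w := by
  by_contra hc
  rw [a.injective (ha _ hc)] at hc
  exact hc hw

theorem commute_of_mem_rist {u v : Vtx X} (huv : ¬u <+: v) (hvu : ¬v <+: u)
    {a b : Equiv.Perm (Vtx X)} (ha : a ∈ rist u) (hb : b ∈ rist v) : Commute a b := by
  have hdisj {w : Vtx X} (hu : u <+: w) (hv : v <+: w) : False :=
    (List.prefix_or_prefix_of_prefix hu hv).elim huv hvu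
  refine Equiv.ext fun w => ?_
  change a (b w) = b (a w)
  by_cases hu : u <+: w
  · rw [hb _ fun hv => hdisj hu hv, hb _ fun hv => hdisj (isPrefix_apply_of_mem_rist ha hu) hv]
  · by_cases hv : v <+: w
    · rw [ha _ hu, ha _ fun hu' => hdisj hu' (isPrefix_apply_of_mem_rist hb hv)]
    · rw [hb _ hv, ha _ hu, hb _ hv]

theorem commute_of_mem_rist_of_length_eq {u v : Vtx X} (hlen : u.length = v.length) (hne : u ≠ v)
    {a b : Equiv.Perm (Vtx X)} (ha : a ∈ rist u) (hb : b ∈ rist v) : Commute a b :=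
  commute_of_mem_rist (fun h => hne (h.eq_of_length hlen))
    (fun h => hne (h.eq_of_length hlen.symm).symm) ha hb

theorem conj_mem_rist {g h : Equiv.Perm (Vtx X)} (hh : IsTreeAut h) {u : Vtx X}
    (hg : g ∈ rist u) : h * g * h⁻¹ ∈ rist (h u) := by
  intro w hw
  have hw' : ¬u <+: h⁻¹ w := fun hu => hw <| by
    simpa only [Equiv.Perm.inv_def, Equiv.apply_symm_apply] using hh.isPrefix_apply_s9 hu
  change h (g (h⁻¹ w)) = w
  rw [hg _ hw', Equiv.Perm.inv_def, Equiv.apply_symm_apply]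

theorem commutator_ristG_eq_bot {G : Subgroup (Equiv.Perm (Vtx X))} {u v : Vtx X}
    (hlen : u.length = v.length) (hne : u ≠ v) : ⁅ristG G u, ristG G v⁆ = ⊥ :=
  Subgroup.commutator_eq_bot_iff_le_centralizer.mpr fun _a ha _b hb =>
    (commute_of_mem_rist_of_length_eq hlen hne ha.1 hb.1).symm.eq

theorem commutator_ristG_le_of_apply_ne {Γ N : Subgroup (Equiv.Perm (Vtx X))}
    (hΓN : Γ ≤ Subgroup.normalizer N) {g : Equiv.Perm (Vtx X)} (hgN : g ∈ N) (hg : IsTreeAut g)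
    {u : Vtx X} (hu : g u ≠ u) : ⁅ristG Γ u, ristG Γ u⁆ ≤ N :=
  Subgroup.commutator_le_of_commute_conj (inf_le_right.trans hΓN) hgN fun _ξ hξ _η hη =>
    commute_of_mem_rist_of_length_eq (hg.length_apply_s9 u) hu (conj_mem_rist hg hξ.1) hη.1

theorem commutator_ristG_le_of_length_eq {Γ N : Subgroup (Equiv.Perm (Vtx X))}
    (hAut : ∀ g ∈ Γ, IsTreeAut g) (hLT : LevelTransitive Γ) (hΓN : Γ ≤ Subgroup.normalizer N)
    {u v : Vtx X} (hu : ⁅ristG Γ u, ristG Γ u⁆ ≤ N) (hlen : v.length = u.length) :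
    ⁅ristG Γ v, ristG Γ v⁆ ≤ N := by
  obtain ⟨h, hhΓ, rfl⟩ := hLT v u hlen
  have hconj (ξ : Equiv.Perm (Vtx X)) (hξ : ξ ∈ ristG Γ v) : h * ξ * h⁻¹ ∈ ristG Γ (h v) :=
    ⟨conj_mem_rist (hAut h hhΓ) hξ.1, Γ.mul_mem (Γ.mul_mem hhΓ hξ.2) (Γ.inv_mem hhΓ)⟩
  refine Subgroup.commutator_le.mpr fun ξ hξ η hη => ?_
  refine (Subgroup.mem_normalizer_iff.mp (hΓN hhΓ) _).mpr ?_
  rw [conjugate_commutatorElement]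
  exact Subgroup.commutator_le.mp hu _ (hconj ξ hξ) _ (hconj η hη)

end Tree

theorem normal_subgroup_contains_ristLevel_commutator_general
    {X : Type*}
    (Γ : Subgroup (Equiv.Perm (Vtx X))) (hAut : ∀ g ∈ Γ, IsTreeAut g)
    (hLT : LevelTransitive Γ)
    (N : Subgroup (Equiv.Perm (Vtx X))) (hNG : N ≤ Γ)
    (hNnorm : ∀ g ∈ Γ, ∀ x ∈ N, g * x * g⁻¹ ∈ N) (hN : N ≠ ⊥) :
    ∃ n : ℕ, ⁅ristLevel Γ n, ristLevel Γ n⁆ ≤ N := by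
  have hΓN : Γ ≤ Subgroup.normalizer N := Subgroup.le_normalizer_iff.mpr hNnorm
  obtain ⟨⟨g, hgN⟩, hg1⟩ := Subgroup.ne_bot_iff_exists_ne_one.mp hN
  obtain ⟨u, hu⟩ : ∃ u, g u ≠ u := not_forall.mp fun h => hg1 (Subtype.ext (Equiv.ext h))
  have hmoved := commutator_ristG_le_of_apply_ne hΓN hgN (hAut g (hNG hgN)) hu
  refine ⟨u.length, ?_⟩
  rw [ristLevel, iSup_subtype']
  refine Subgroup.commutator_iSup_le (fun v => inf_le_right.trans hΓN) fun ⟨v, hv⟩ ⟨w, hw⟩ => ?_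
  by_cases hvw : v = w
  · subst hvw
    exact commutator_ristG_le_of_length_eq hAut hLT hΓN hmoved hv
  · rw [commutator_ristG_eq_bot (hv.trans hw.symm) hvw]
    exact bot_le

/-- a non-trivial normal subgroup of a level-transitive branch
group contains the derived subgroup of some level rigid stabilizer. -/
theorem normal_subgroup_contains_ristLevel_commutator
    {X : Type*} [DecidableEq X] [Fintype X]
    (Γ : Subgroup (Equiv.Perm (Vtx X))) (hAut : ∀ g ∈ Γ, IsTreeAut g)
    (hLT : LevelTransitive Γ)
    (hbr : ∀ n : ℕ, ((ristLevel Γ n).subgroupOf Γ).FiniteIndex)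
    (N : Subgroup (Equiv.Perm (Vtx X))) (hNG : N ≤ Γ)
    (hNnorm : ∀ g ∈ Γ, ∀ x ∈ N, g * x * g⁻¹ ∈ N) (hN : N ≠ ⊥) :
    ∃ n : ℕ, ⁅ristLevel Γ n, ristLevel Γ n⁆ ≤ N :=
  normal_subgroup_contains_ristLevel_commutator_general Γ hAut hLT N hNG hNnorm hN
end
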